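/- Let G be a finite Abelian group such that every subgroup of G has the semi-Hajós property. Then every kaleidoscopical configuration K ⊆ G (with respect to the regular action of G on itself) is splittable. -/

import Mathlib

/-!
A kaleidoscopical configuration `K` tiles `G`: if `B` is the set of inverses of one colour
class, then `G = KB`. We argue by induction on `|G|`, for complemented `K`. If `K = G`, the chain
`Δ_G ⊆ G × G` works. Otherwise the semi-Hajós property gives a nontrivial subgroup `N`
stabilising `K` or stabilising a complementer factor `T`. In either case the image of `K` in
`G ⧸ N` is again complemented, hence splittable by induction; pulling its chain back to `G` and
prepending `Δ_G ⊆ (cosets of N)` splits `K`, the new step being parallel if `N` stabilises `K`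
and orthogonal if `N` stabilises `T`. The hypothesis passes to quotients because every quotient
of a finite abelian group is isomorphic to a subgroup (by character duality).
-/

open Pointwise

universe u v

/-- `H = AB` is a factorization of the group `H`. -/
def IsFactorization {H : Type v} [Group H] (A B : Set H) : Prop :=
  Function.Bijective (fun p : A × B => (p.1 : H) * (p.2 : H))

/-- `A ⊆ H` is periodic: `hA = A` for some non-identity `h ∈ H`. -/
def IsPeriodic {H : Type v} [Group H] (A : Set H) : Prop :=
  ∃ h : H, h ≠ 1 ∧ h • A = A

/-- An Abelian group `H` has the semi-Hajós property if every complemented proper subset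
`A ⊊ H` either is periodic or has a periodic complementer factor. -/
def SemiHajosGroup (H : Type v) [Group H] : Prop :=
  ∀ A : Set H, A ≠ Set.univ → (∃ B : Set H, IsFactorization A B) →
    (IsPeriodic A ∨ ∃ B : Set H, IsFactorization A B ∧ IsPeriodic B)

/-- An equivalence relation `E` on `G` is `G`-invariant (for the regular action). -/
def SetoidInvariant {G : Type u} [Group G] (E : Setoid G) : Prop :=
  ∀ (g x y : G), E.r x y → E.r (g * x) (g * y)

/-- `K` is a kaleidoscopical configuration in the group `G` with the regular action. -/
def Kaleidoscopical {G : Type u} [Group G] (K : Set G) : Prop :=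
  ∃ (C : Type u) (χ : G → C), Function.Surjective χ ∧
    ∀ g : G, Set.BijOn χ (g • K) Set.univ

/-- `K` is `F/E`-parallel: `[K]_E ∩ [x]_F = [x]_F` for all `x ∈ K`. -/
def ParallelRel {G : Type u} (K : Set G) (E F : Setoid G) : Prop :=
  ∀ x ∈ K, {y | ∃ k ∈ K, E.r k y} ∩ {y | F.r x y} = {y | F.r x y}

/-- `K` is `F/E`-orthogonal: `[K]_E ∩ [x]_F = [x]_E` for all `x ∈ K`. -/
def OrthogonalRel {G : Type u} (K : Set G) (E F : Setoid G) : Prop :=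
  ∀ x ∈ K, {y | ∃ k ∈ K, E.r k y} ∩ {y | F.r x y} = {y | E.r x y}

/-- `K ⊆ G` is splittable: there is an increasing chain
`Δ_G = E_0 ⊆ E_1 ⊆ … ⊆ E_m = G × G` of `G`-invariant equivalence relations such that for
every `i < m` the set `K` is `E_{i+1}/E_i`-parallel or `E_{i+1}/E_i`-orthogonal. -/
def Splittable {G : Type u} [Group G] (K : Set G) : Prop :=
  ∃ (m : ℕ) (E : Fin (m + 1) → Setoid G), Monotone E ∧ E 0 = ⊥ ∧ E (Fin.last m) = ⊤ ∧
    (∀ i, SetoidInvariant (E i)) ∧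
    ∀ i : Fin m, ParallelRel K (E i.castSucc) (E i.succ) ∨
      OrthogonalRel K (E i.castSucc) (E i.succ)

section Factorization

variable {H H' : Type v} [Group H] [Group H']

lemma isFactorization_iff {A B : Set H} :
    IsFactorization A B ↔
      (∀ g : H, ∃ a ∈ A, ∃ b ∈ B, a * b = g) ∧
        ∀ a ∈ A, ∀ b ∈ B, ∀ a' ∈ A, ∀ b' ∈ B,
          a * b = a' * b' → a = a' ∧ b = b' := by
  refine ⟨fun ⟨hinj, hsurj⟩ => ⟨fun g => ?_, fun a ha b hb a' ha' b' hb' hab => ?_⟩,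
    fun ⟨hsurj, hinj⟩ => ⟨?_, fun g => ?_⟩⟩
  · obtain ⟨⟨⟨a, ha⟩, ⟨b, hb⟩⟩, rfl⟩ := hsurj g
    exact ⟨a, ha, b, hb, rfl⟩
  · simpa using @hinj (⟨a, ha⟩, ⟨b, hb⟩) (⟨a', ha'⟩, ⟨b', hb'⟩) hab
  · rintro ⟨⟨a, ha⟩, ⟨b, hb⟩⟩ ⟨⟨a', ha'⟩, ⟨b', hb'⟩⟩ hab
    obtain ⟨rfl, rfl⟩ := hinj a ha b hb a' ha' b' hb' hab
    rfl
  · obtain ⟨a, ha, b, hb, rfl⟩ := hsurj g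
    exact ⟨(⟨a, ha⟩, ⟨b, hb⟩), rfl⟩

lemma IsFactorization.nonempty_right {A B : Set H} (h : IsFactorization A B) : B.Nonempty :=
  let ⟨_, _, b, hb, _⟩ := (isFactorization_iff.1 h).1 1
  ⟨b, hb⟩

lemma IsFactorization.image (e : H ≃* H') {A B : Set H} (h : IsFactorization A B) :
    IsFactorization (e '' A) (e '' B) := by
  obtain ⟨hsurj, hinj⟩ := isFactorization_iff.1 h
  refine isFactorization_iff.2 ⟨fun g => ?_, ?_⟩
  · obtain ⟨a, ha, b, hb, hab⟩ := hsurj (e.symm g)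
    exact ⟨e a, ⟨a, ha, rfl⟩, e b, ⟨b, hb, rfl⟩,
      by rw [← map_mul, hab, e.apply_symm_apply]⟩
  · rintro _ ⟨a, ha, rfl⟩ _ ⟨b, hb, rfl⟩ _ ⟨a', ha', rfl⟩ _ ⟨b', hb', rfl⟩ hab
    rw [← map_mul, ← map_mul] at hab
    obtain ⟨rfl, rfl⟩ := hinj a ha b hb a' ha' b' hb' (e.injective hab)
    exact ⟨rfl, rfl⟩

lemma isPeriodic_iff_stabilizer_ne_bot {A : Set H} :
    IsPeriodic A ↔ MulAction.stabilizer H A ≠ ⊥ := by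
  simp [IsPeriodic, Subgroup.ne_bot_iff_exists_ne_one, MulAction.mem_stabilizer_iff, and_comm]

lemma mul_mem_of_mem_stabilizer {N : Subgroup H} {T : Set H}
    (hN : N ≤ MulAction.stabilizer H T) {n t : H} (hn : n ∈ N) (ht : t ∈ T) : n * t ∈ T :=
  (MulAction.mem_stabilizer_set.1 (hN hn) t).2 ht

lemma IsPeriodic.image (e : H ≃* H') {A : Set H} (h : IsPeriodic A) : IsPeriodic (e '' A) := by
  obtain ⟨g, hg, hgA⟩ := h
  exact ⟨e g, by simpa using hg, by rw [← Set.image_smul_distrib, hgA]⟩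

lemma SemiHajosGroup.of_mulEquiv (e : H ≃* H') (h : SemiHajosGroup H) : SemiHajosGroup H' := by
  intro A hA ⟨B, hAB⟩
  have he : e '' (e.symm '' A) = A := by simp [Set.image_image]
  have hA' : e.symm '' A ≠ Set.univ := fun hcon =>
    hA (by rw [← he, hcon, Set.image_univ_of_surjective e.surjective])
  rw [← he]
  rcases h _ hA' ⟨_, hAB.image e.symm⟩ with hper | ⟨T, hT, hTper⟩
  · exact Or.inl (hper.image e)
  · exact Or.inr ⟨e '' T, hT.image e, hTper.image e⟩

end Factorization

lemma Kaleidoscopical.exists_isFactorization {G : Type u} [Group G] {K : Set G}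
    (hK : Kaleidoscopical K) : ∃ B : Set G, IsFactorization K B := by
  obtain ⟨C, χ, -, hχ⟩ := hK
  refine ⟨(χ ⁻¹' {χ 1})⁻¹, isFactorization_iff.2 ⟨fun g => ?_, ?_⟩⟩
  · obtain ⟨_, ⟨k, hk, rfl⟩, hkc⟩ := (hχ g⁻¹).2.2 (Set.mem_univ (χ 1))
    exact ⟨k, hk, (g⁻¹ * k)⁻¹, by simpa using hkc, by group⟩
  · intro k hk b hb k' hk' b' hb' hkb
    have hk'b : (k * b)⁻¹ * k' = b'⁻¹ := by rw [hkb]; group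
    have hkk : k = k' := by
      refine mul_left_cancel ((hχ (k * b)⁻¹).2.1 ⟨k, hk, rfl⟩ ⟨k', hk', rfl⟩ ?_)
      simp only [smul_eq_mul, hk'b]
      rw [show (k * b)⁻¹ * k = b⁻¹ by group]
      exact hb.trans hb'.symm
    subst hkk
    exact ⟨rfl, mul_left_cancel hkb⟩

section Splitting

variable {G Q : Type u}

lemma ParallelRel.comap (f : G → Q) {K : Set G} {E F : Setoid Q}
    (h : ParallelRel (f '' K) E F) : ParallelRel K (E.comap f) (F.comap f) := by
  intro x hx
  refine Set.inter_eq_right.2 fun y hy => ?_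
  obtain ⟨⟨_, ⟨k, hk, rfl⟩, hky⟩, -⟩ :=
    (h (f x) ⟨x, hx, rfl⟩).symm.subset (show F.r (f x) (f y) from hy)
  exact ⟨k, hk, hky⟩

lemma OrthogonalRel.comap (f : G → Q) {K : Set G} {E F : Setoid Q}
    (h : OrthogonalRel (f '' K) E F) : OrthogonalRel K (E.comap f) (F.comap f) := by
  intro x hx
  ext y
  simpa [Setoid.comap_rel] using Set.ext_iff.1 (h (f x) ⟨x, hx, rfl⟩) (f y)

variable [Group G] [Group Q]

lemma setoidInvariant_bot : SetoidInvariant (⊥ : Setoid G) := by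
  rintro g x y (rfl : x = y)
  rfl

lemma setoidInvariant_top : SetoidInvariant (⊤ : Setoid G) :=
  fun _ _ _ _ => trivial

lemma SetoidInvariant.comap (π : G →* Q) {E : Setoid Q} (hE : SetoidInvariant E) :
    SetoidInvariant (E.comap π) := by
  intro g x y hxy
  simpa [Setoid.comap_rel] using hE (π g) _ _ hxy

lemma splittable_univ : Splittable (Set.univ : Set G) := by
  refine ⟨1, ![⊥, ⊤], Fin.monotone_iff_le_succ.2 fun i => by fin_cases i; exact bot_le,
    rfl, rfl, ?_, ?_⟩
  · intro i
    fin_cases i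
    exacts [setoidInvariant_bot, setoidInvariant_top]
  · intro i
    left
    intro x _
    exact Set.inter_eq_right.2 fun y _ => ⟨y, Set.mem_univ y, Setoid.refl' _ y⟩

lemma Splittable.of_image (π : G →* Q) {K : Set G} (hK : Splittable (π '' K))
    (h₀ : ParallelRel K ⊥ (Setoid.ker π) ∨ OrthogonalRel K ⊥ (Setoid.ker π)) :
    Splittable K := by
  obtain ⟨m, E, hmono, h0, hlast, hinv, hsteps⟩ := hK
  have hker : (E 0).comap π = Setoid.ker π := by rw [h0]; rfl
  refine ⟨m + 1, Fin.cons ⊥ fun i => (E i).comap π, ?_, rfl, ?_, ?_, ?_⟩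
  · refine Fin.monotone_iff_le_succ.2 (Fin.cases bot_le fun i => ?_)
    simp only [← Fin.succ_castSucc, Fin.cons_succ]
    exact fun x y hxy => hmono (Fin.castSucc_le_succ i) hxy
  · rw [← Fin.succ_last, Fin.cons_succ, hlast]
    rfl
  · exact Fin.cases setoidInvariant_bot fun i => (hinv i).comap π
  · refine Fin.cases ?_ fun i => ?_
    · simpa [hker] using h₀
    · simp only [← Fin.succ_castSucc, Fin.cons_succ]
      exact (hsteps i).imp (ParallelRel.comap π) (OrthogonalRel.comap π)

end Splitting

lemma Subgroup.card_quotient_lt {G : Type*} [Group G] [Finite G] {N : Subgroup G} (hN : N ≠ ⊥) :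
    Nat.card (G ⧸ N) < Nat.card G := by
  rw [N.card_eq_card_quotient_mul_card_subgroup]
  exact lt_mul_of_one_lt_right Nat.card_pos (N.one_lt_card_iff_ne_bot.2 hN)

section Quotient

variable {G : Type u} [CommGroup G]

lemma IsFactorization.symm {K T : Set G} (h : IsFactorization K T) : IsFactorization T K := by
  obtain ⟨hsurj, hinj⟩ := isFactorization_iff.1 h
  refine isFactorization_iff.2 ⟨fun g => ?_, fun t ht k hk t' ht' k' hk' htk => ?_⟩
  · obtain ⟨k, hk, t, ht, rfl⟩ := hsurj g
    exact ⟨t, ht, k, hk, mul_comm t k⟩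
  · rw [mul_comm t, mul_comm t'] at htk
    exact (hinj k hk t ht k' hk' t' ht' htk).symm

lemma IsFactorization.image_mk' {K T : Set G} (h : IsFactorization K T) {N : Subgroup G}
    (hN : N ≤ MulAction.stabilizer G T) :
    IsFactorization (QuotientGroup.mk' N '' K) (QuotientGroup.mk' N '' T) := by
  obtain ⟨hsurj, hinj⟩ := isFactorization_iff.1 h
  refine isFactorization_iff.2 ⟨fun q => ?_, ?_⟩
  · obtain ⟨g, rfl⟩ := QuotientGroup.mk'_surjective N q
    obtain ⟨k, hk, t, ht, rfl⟩ := hsurj g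
    exact ⟨_, ⟨k, hk, rfl⟩, _, ⟨t, ht, rfl⟩, (map_mul _ _ _).symm⟩
  · rintro _ ⟨k, hk, rfl⟩ _ ⟨t, ht, rfl⟩ _ ⟨k', hk', rfl⟩ _ ⟨t', ht', rfl⟩ hkt
    rw [← map_mul, ← map_mul, QuotientGroup.mk'_eq_mk'] at hkt
    obtain ⟨n, hn, hkt⟩ := hkt
    obtain ⟨rfl, rfl⟩ := hinj k hk (n * t) (mul_mem_of_mem_stabilizer hN hn ht) k' hk' t' ht'
      (by rw [← hkt, mul_comm n, mul_assoc])
    exact ⟨rfl, (QuotientGroup.mk'_eq_mk' N).2 ⟨n, hn, mul_comm t n⟩⟩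

lemma parallelRel_bot_ker_mk' {K : Set G} {N : Subgroup G}
    (hN : N ≤ MulAction.stabilizer G K) :
    ParallelRel K ⊥ (Setoid.ker (QuotientGroup.mk' N)) := by
  intro x hx
  refine Set.inter_eq_right.2 fun y (hy : QuotientGroup.mk' N x = QuotientGroup.mk' N y) => ?_
  obtain ⟨n, hn, rfl⟩ := (QuotientGroup.mk'_eq_mk' N).1 hy
  exact ⟨x * n, mul_comm n x ▸ mul_mem_of_mem_stabilizer hN hn hx, rfl⟩

lemma orthogonalRel_bot_ker_mk' {K T : Set G} (h : IsFactorization K T) {N : Subgroup G}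
    (hN : N ≤ MulAction.stabilizer G T) :
    OrthogonalRel K ⊥ (Setoid.ker (QuotientGroup.mk' N)) := by
  obtain ⟨t, ht⟩ := h.nonempty_right
  intro x hx
  ext y
  constructor
  · rintro ⟨⟨k, hk, rfl : k = y⟩, hxk : QuotientGroup.mk' N x = QuotientGroup.mk' N k⟩
    obtain ⟨n, hn, rfl⟩ := (QuotientGroup.mk'_eq_mk' N).1 hxk
    -- `x * (n * t) = (x * n) * t` are two factorizations of one element
    exact ((isFactorization_iff.1 h).2 x hx _ (mul_mem_of_mem_stabilizer hN hn ht) _ hk t ht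
      (mul_assoc x n t).symm).1
  · rintro (rfl : x = y)
    exact ⟨⟨x, hx, rfl⟩, rfl⟩

lemma SemiHajosGroup.quotient_quotient (hG : ∀ N : Subgroup G, SemiHajosGroup (G ⧸ N))
    (N : Subgroup G) (M : Subgroup (G ⧸ N)) : SemiHajosGroup ((G ⧸ N) ⧸ M) := by
  have hNM : N ≤ M.comap (QuotientGroup.mk' N) := fun x hx => by
    simp [(QuotientGroup.eq_one_iff x).2 hx]
  rw [← Subgroup.map_comap_eq_self_of_surjective (QuotientGroup.mk'_surjective N) M]
  exact (hG _).of_mulEquiv (QuotientGroup.quotientQuotientEquivQuotient N _ hNM).symm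

theorem Splittable.of_isFactorization [Finite G]
    (hG : ∀ N : Subgroup G, SemiHajosGroup (G ⧸ N)) {K B : Set G}
    (hKB : IsFactorization K B) : Splittable K := by
  induction hn : Nat.card G using Nat.strong_induction_on generalizing G with
  | _ n ih =>
  subst hn
  by_cases hK : K = Set.univ
  · exact hK ▸ splittable_univ
  have splittable_image (N : Subgroup G) (hN : N ≠ ⊥) (T : Set (G ⧸ N))
      (hT : IsFactorization (QuotientGroup.mk' N '' K) T) :
      Splittable (QuotientGroup.mk' N '' K) :=
    ih _ (N.card_quotient_lt hN) (SemiHajosGroup.quotient_quotient hG N) hT rfl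
  have hG₀ : SemiHajosGroup G := (hG ⊥).of_mulEquiv QuotientGroup.quotientBot
  rcases hG₀ K hK ⟨B, hKB⟩ with hper | ⟨T, hKT, hT⟩
  · exact (splittable_image _ (isPeriodic_iff_stabilizer_ne_bot.1 hper) _
      (hKB.symm.image_mk' le_rfl).symm).of_image _ (Or.inl (parallelRel_bot_ker_mk' le_rfl))
  · exact (splittable_image _ (isPeriodic_iff_stabilizer_ne_bot.1 hT) _
      (hKT.image_mk' le_rfl)).of_image _ (Or.inr (orthogonalRel_bot_ker_mk' hKT le_rfl))

end Quotient

lemma exists_subgroup_mulEquiv_quotient {G : Type*} [CommGroup G] [Finite G] (N : Subgroup G) :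
    ∃ H : Subgroup G, Nonempty (H ≃* G ⧸ N) := by
  -- `G` and `G ⧸ N` are isomorphic to their character groups, and restriction along
  -- `G → G ⧸ N` embeds the characters of `G ⧸ N` into those of `G`
  obtain ⟨eG⟩ := CommGroup.monoidHom_mulEquiv_of_hasEnoughRootsOfUnity G ℂ
  obtain ⟨eQ⟩ := CommGroup.monoidHom_mulEquiv_of_hasEnoughRootsOfUnity (G ⧸ N) ℂ
  let f : ((G ⧸ N) →* ℂˣ) →* G :=
    eG.toMonoidHom.comp (MonoidHom.compHom' (QuotientGroup.mk' N))
  have hf : Function.Injective f :=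
    eG.injective.comp fun _ _ hab => QuotientGroup.monoidHom_ext N hab
  exact ⟨f.range, ⟨(MonoidHom.ofInjective hf).symm.trans eQ⟩⟩

/-- If every subgroup of a finite Abelian group `G` has the semi-Hajós
property, then every kaleidoscopical configuration `K ⊆ G` (for the regular action of `G`
on itself) is splittable. -/
theorem stmt19 {G : Type u} [CommGroup G] [Finite G]
    (h : ∀ H : Subgroup G, SemiHajosGroup ↥H) :
    ∀ K : Set G, Kaleidoscopical K → Splittable K := by
  intro K hK
  obtain ⟨B, hKB⟩ := hK.exists_isFactorization
  refine Splittable.of_isFactorization (fun N => ?_) hKB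
  obtain ⟨H, ⟨e⟩⟩ := exists_subgroup_mulEquiv_quotient N
  exact (h H).of_mulEquiv e
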